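/- For every nonnegative integer i, b·f(i)² + a·f(i+1)·f(i) − f(i+1)² + (−b)^i = 0 (generalized Cassini identity). -/
import Mathlib

def e2 (a b : ℕ) : ℕ → ℤ
  | 0 => 0
  | 1 => 1
  | (n+2) => a * e2 a b (n+1) + b * e2 a b n

theorem stmt16 (a b : ℕ) (ha : 0 < a) (hb : 0 < b) (i : ℕ) :
    b * (e2 a b i)^2 + a * e2 a b (i+1) * e2 a b i - (e2 a b (i+1))^2 + (-(b : ℤ))^i = 0 := by
  induction i with
  | zero => simp [e2]
  | succ n ih =>
    rw [show n+1+1 = n+2 from rfl, e2, pow_succ]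
    linear_combination (-(b:ℤ)) * ih
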